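/- (Entropy circulation on closed moving 2-surfaces.) Let n ≥ 1, let u : ℝ × ℝⁿ → ℝⁿ be smooth, and let g, h, S : ℝ × ℝⁿ → ℝ be smooth with ∂ₜu + (u·∇)u = ∇g + h∇S and ∂ₜS + ⟨u, ∇S⟩ = 0 everywhere. Let Ψ : ℝ × ℝ² → ℝⁿ be twice continuously differentiable, 1-periodic in each of the two surface parameters, with ∂ₜΨ(t,s) = u(t, Ψ(t,s)) for all (t,s). Then for every continuously differentiable f : ℝ → ℝ, the integral t ↦ ∫_{[0,1]²} f(S(t, Ψ(t,s))) · ω(t, Ψ(t,s))(∂₁Ψ(t,s), ∂₂Ψ(t,s)) ds is constant. -/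

import Mathlib

open scoped RealInnerProductSpace

/-- The vorticity 2-form `ω(t,x)(v,w) = ⟨D_x u v, w⟩ − ⟨D_x u w, v⟩` of a
time-dependent velocity field. -/
noncomputable def vorticity2Form {n : ℕ}
    (u : ℝ × EuclideanSpace ℝ (Fin n) → EuclideanSpace ℝ (Fin n))
    (t : ℝ) (x v w : EuclideanSpace ℝ (Fin n)) : ℝ :=
  ⟪fderiv ℝ (fun y => u (t, y)) x v, w⟫ - ⟪fderiv ℝ (fun y => u (t, y)) x w, v⟫

section aux
variable {α β : Type*} [NormedAddCommGroup α] [NormedSpace ℝ α]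
  [NormedAddCommGroup β] [NormedSpace ℝ β]

lemma aux_slice_right {φ : ℝ × α → β} (hφ : Differentiable ℝ φ) (t : ℝ) (x : α) :
    HasFDerivAt (fun y => φ (t, y)) ((fderiv ℝ φ (t, x)).comp (ContinuousLinearMap.inr ℝ ℝ α)) x :=
  (hφ (t, x)).hasFDerivAt.comp x ((hasFDerivAt_const t x).prodMk (hasFDerivAt_id x))

lemma aux_fderiv_slice_right {φ : ℝ × α → β} (hφ : Differentiable ℝ φ) (t : ℝ) (x : α) (v : α) :
    fderiv ℝ (fun y => φ (t, y)) x v = fderiv ℝ φ (t, x) (0, v) := by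
  rw [(aux_slice_right hφ t x).fderiv]; rfl

lemma aux_slice_left {φ : ℝ × α → β} (hφ : Differentiable ℝ φ) (t : ℝ) (x : α) :
    HasDerivAt (fun τ => φ (τ, x)) (fderiv ℝ φ (t, x) (1, 0)) t :=
  (hφ (t, x)).hasFDerivAt.comp_hasDerivAt t ((hasDerivAt_id t).prodMk (hasDerivAt_const t x))

lemma aux_deriv_slice_left {φ : ℝ × α → β} (hφ : Differentiable ℝ φ) (t : ℝ) (x : α) :
    deriv (fun τ => φ (τ, x)) t = fderiv ℝ φ (t, x) (1, 0) :=
  (aux_slice_left hφ t x).deriv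

end aux

section main
variable {n : ℕ}
  {u : ℝ × EuclideanSpace ℝ (Fin n) → EuclideanSpace ℝ (Fin n)}
  {g h S : ℝ × EuclideanSpace ℝ (Fin n) → ℝ}
  {Ψ : ℝ × (Fin 2 → ℝ) → EuclideanSpace ℝ (Fin n)}

lemma transport_full (hΨ : ContDiff ℝ 2 Ψ)
    (htrans : ∀ (t : ℝ) (s : Fin 2 → ℝ), deriv (fun τ => Ψ (τ, s)) t = u (t, Ψ (t, s))) :
    ∀ p : ℝ × (Fin 2 → ℝ), fderiv ℝ Ψ p (1, 0) = u (p.1, Ψ p) := by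
  intro p
  have := aux_deriv_slice_left (hΨ.differentiable two_ne_zero) p.1 p.2
  rw [← this, htrans]

-- gradient pairing: ⟪∇(slice), v⟫ = full fderiv at (0,v)
lemma grad_slice_inner {φ : ℝ × EuclideanSpace ℝ (Fin n) → ℝ} (hφ : Differentiable ℝ φ)
    (t : ℝ) (x v : EuclideanSpace ℝ (Fin n)) :
    ⟪gradient (fun y => φ (t, y)) x, v⟫ = fderiv ℝ φ (t, x) (0, v) := by
  rw [gradient, InnerProductSpace.toDual_symm_apply, aux_fderiv_slice_right hφ t x v]

-- entropy: S is constant along trajectories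
lemma sigma_const (hu : ContDiff ℝ (⊤ : ℕ∞) u) (hS : ContDiff ℝ (⊤ : ℕ∞) S) (hΨ : ContDiff ℝ 2 Ψ)
    (entropy : ∀ (t : ℝ) (x : EuclideanSpace ℝ (Fin n)),
      deriv (fun τ => S (τ, x)) t + ⟪u (t, x), gradient (fun y => S (t, y)) x⟫ = 0)
    (htrans : ∀ (t : ℝ) (s : Fin 2 → ℝ), deriv (fun τ => Ψ (τ, s)) t = u (t, Ψ (t, s))) :
    ∀ (t : ℝ) (s : Fin 2 → ℝ), S (t, Ψ (t, s)) = S (0, Ψ (0, s)) := by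
  have hSd : Differentiable ℝ S := hS.differentiable (by simp)
  have hΨd : Differentiable ℝ Ψ := hΨ.differentiable two_ne_zero
  intro t s
  have key : ∀ τ : ℝ, HasDerivAt (fun τ' => S (τ', Ψ (τ', s))) 0 τ := by
    intro τ
    have hκ : HasDerivAt (fun τ' => ((τ' : ℝ), Ψ (τ', s)))
        ((1 : ℝ), u (τ, Ψ (τ, s))) τ := by
      have hΨs : HasDerivAt (fun τ' => Ψ (τ', s)) (u (τ, Ψ (τ, s))) τ := by
        have := aux_slice_left hΨd τ s
        rwa [transport_full hΨ htrans (τ, s)] at this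
      exact (hasDerivAt_id τ).prodMk hΨs
    have hcomp := (hSd (τ, Ψ (τ, s))).hasFDerivAt.comp_hasDerivAt τ hκ
    have hval : fderiv ℝ S (τ, Ψ (τ, s)) (1, u (τ, Ψ (τ, s))) = 0 := by
      have h1 : fderiv ℝ S (τ, Ψ (τ, s)) ((1 : ℝ), u (τ, Ψ (τ, s)))
          = fderiv ℝ S (τ, Ψ (τ, s)) (1, 0) + fderiv ℝ S (τ, Ψ (τ, s)) (0, u (τ, Ψ (τ, s))) := by
        rw [← map_add]; norm_num
      have h2 := entropy τ (Ψ (τ, s))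
      rw [aux_deriv_slice_left hSd τ (Ψ (τ, s)),
        real_inner_comm, grad_slice_inner hSd τ (Ψ (τ, s)) (u (τ, Ψ (τ, s)))] at h2
      rw [h1]; linarith
    rwa [hval] at hcomp
  have := is_const_of_deriv_eq_zero (f := fun τ' => S (τ', Ψ (τ', s)))
    (fun τ => (key τ).differentiableAt) (fun τ => (key τ).deriv) t 0
  exact this

-- Euler in full-fderiv scalar form, paired with a fixed vector w
lemma euler_scalar (hu : ContDiff ℝ (⊤ : ℕ∞) u) (hg : ContDiff ℝ (⊤ : ℕ∞) g) (hh : ContDiff ℝ (⊤ : ℕ∞) h)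
    (hS : ContDiff ℝ (⊤ : ℕ∞) S)
    (euler : ∀ (t : ℝ) (x : EuclideanSpace ℝ (Fin n)),
      deriv (fun τ => u (τ, x)) t + fderiv ℝ (fun y => u (t, y)) x (u (t, x))
        = gradient (fun y => g (t, y)) x + h (t, x) • gradient (fun y => S (t, y)) x) :
    ∀ (q : ℝ × EuclideanSpace ℝ (Fin n)) (w : EuclideanSpace ℝ (Fin n)),
      ⟪fderiv ℝ u q (1, u q), w⟫ = fderiv ℝ g q (0, w) + h q * fderiv ℝ S q (0, w) := by
  have hud : Differentiable ℝ u := hu.differentiable (by simp)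
  have hgd : Differentiable ℝ g := hg.differentiable (by simp)
  have hSd : Differentiable ℝ S := hS.differentiable (by simp)
  intro q w
  obtain ⟨t, x⟩ := q
  have h2 := euler t x
  rw [aux_deriv_slice_left hud t x] at h2
  have h3 : fderiv ℝ (fun y => u (t, y)) x (u (t, x)) = fderiv ℝ u (t, x) (0, u (t, x)) :=
    aux_fderiv_slice_right hud t x _
  rw [h3] at h2
  have h4 : fderiv ℝ u (t, x) ((1 : ℝ), u (t, x))
      = fderiv ℝ u (t, x) (1, 0) + fderiv ℝ u (t, x) (0, u (t, x)) := by
    rw [← map_add]; norm_num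
  have h5 := congrArg (fun z => ⟪z, w⟫) h2
  simp only [inner_add_left] at h5 ⊢
  rw [h4, inner_add_left]
  rw [real_inner_smul_left] at h5
  have e1 : (inner ℝ (gradient (fun y => g (t, y)) x) w : ℝ) = fderiv ℝ g (t, x) (0, w) := by
    exact grad_slice_inner hgd t x w
  have e2 : (inner ℝ (gradient (fun y => S (t, y)) x) w : ℝ) = fderiv ℝ S (t, x) (0, w) := by
    exact grad_slice_inner hSd t x w
  rw [e1, e2] at h5
  exact h5

-- derivative of κ : p ↦ (p.1, Ψ p)
lemma kappa_hasFDerivAt (hΨ : ContDiff ℝ 2 Ψ) (p : ℝ × (Fin 2 → ℝ)) :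
    HasFDerivAt (fun p' : ℝ × (Fin 2 → ℝ) => (p'.1, Ψ p'))
      ((ContinuousLinearMap.fst ℝ ℝ (Fin 2 → ℝ)).prod (fderiv ℝ Ψ p)) p :=
  (hasFDerivAt_fst).prodMk ((hΨ.differentiable two_ne_zero) p).hasFDerivAt

-- time-derivative of the spatial partial derivatives of Ψ (transport of tangent vectors)
lemma c_hasDerivAt (hu : ContDiff ℝ (⊤ : ℕ∞) u) (hΨ : ContDiff ℝ 2 Ψ)
    (htrans : ∀ (t : ℝ) (s : Fin 2 → ℝ), deriv (fun τ => Ψ (τ, s)) t = u (t, Ψ (t, s)))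
    (t : ℝ) (s v : Fin 2 → ℝ) :
    HasDerivAt (fun τ => fderiv ℝ Ψ (τ, s) (0, v))
      (fderiv ℝ u (t, Ψ (t, s)) (0, fderiv ℝ Ψ (t, s) (0, v))) t := by
  have hΨ' : ContDiff ℝ 1 (fderiv ℝ Ψ) := hΨ.fderiv_right (by norm_num)
  have hΨ'd : Differentiable ℝ (fderiv ℝ Ψ) := hΨ'.differentiable one_ne_zero
  set p : ℝ × (Fin 2 → ℝ) := (t, s) with hp
  have hF : HasFDerivAt (fun p' => fderiv ℝ Ψ p' (0, v))
      ((ContinuousLinearMap.apply ℝ (EuclideanSpace ℝ (Fin n)) ((0 : ℝ), v)).comp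
        (fderiv ℝ (fderiv ℝ Ψ) p)) p :=
    (ContinuousLinearMap.apply ℝ (EuclideanSpace ℝ (Fin n)) ((0 : ℝ), v)).hasFDerivAt.comp p
      (hΨ'd p).hasFDerivAt
  have hD : HasDerivAt (fun τ => fderiv ℝ Ψ (τ, s) (0, v))
      (fderiv ℝ (fderiv ℝ Ψ) p (1, 0) (0, v)) t := by
    have := hF.comp_hasDerivAt t ((hasDerivAt_id t).prodMk (hasDerivAt_const t s))
    simpa [Function.comp_def] using this
  have hsym : fderiv ℝ (fderiv ℝ Ψ) p (1, 0) (0, v)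
      = fderiv ℝ (fderiv ℝ Ψ) p (0, v) (1, 0) :=
    (hΨ.contDiffAt.isSymmSndFDerivAt (by simp)) _ _
  -- now compute fderiv (fderiv Ψ) p (0,v) (1,0) as derivative of p' ↦ fderiv Ψ p' (1,0) = u ∘ κ
  have hG : HasFDerivAt (fun p' => fderiv ℝ Ψ p' ((1 : ℝ), (0 : Fin 2 → ℝ)))
      ((ContinuousLinearMap.apply ℝ (EuclideanSpace ℝ (Fin n)) ((1 : ℝ), (0 : Fin 2 → ℝ))).comp
        (fderiv ℝ (fderiv ℝ Ψ) p)) p :=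
    (ContinuousLinearMap.apply ℝ (EuclideanSpace ℝ (Fin n)) ((1 : ℝ), (0:Fin 2 → ℝ))).hasFDerivAt.comp p
      (hΨ'd p).hasFDerivAt
  have hG' : HasFDerivAt (fun p' : ℝ × (Fin 2 → ℝ) => u (p'.1, Ψ p'))
      ((fderiv ℝ u (p.1, Ψ p)).comp
        ((ContinuousLinearMap.fst ℝ ℝ (Fin 2 → ℝ)).prod (fderiv ℝ Ψ p))) p :=
    ((hu.differentiable (by simp)) _).hasFDerivAt.comp p (kappa_hasFDerivAt hΨ p)
  have hfun : (fun p' => fderiv ℝ Ψ p' ((1 : ℝ), (0 : Fin 2 → ℝ)))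
      = fun p' : ℝ × (Fin 2 → ℝ) => u (p'.1, Ψ p') := by
    funext p'; exact transport_full hΨ htrans p'
  have huniq := (hfun ▸ hG).unique hG'
  have : fderiv ℝ (fderiv ℝ Ψ) p (0, v) (1, 0)
      = fderiv ℝ u (p.1, Ψ p) (0, fderiv ℝ Ψ p (0, v)) := by
    have := congrArg (fun (L : (ℝ × (Fin 2 → ℝ)) →L[ℝ] EuclideanSpace ℝ (Fin n)) => L (0, v)) huniq
    simpa using this
  rw [hsym, this] at hD
  exact hD


lemma kappa_curve_hasDerivAt (hΨ : ContDiff ℝ 2 Ψ)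
    (htrans : ∀ (t : ℝ) (s : Fin 2 → ℝ), deriv (fun τ => Ψ (τ, s)) t = u (t, Ψ (t, s)))
    (t : ℝ) (s : Fin 2 → ℝ) :
    HasDerivAt (fun τ => ((τ : ℝ), Ψ (τ, s))) ((1 : ℝ), u (t, Ψ (t, s))) t := by
  have hΨs : HasDerivAt (fun τ' => Ψ (τ', s)) (u (t, Ψ (t, s))) t := by
    have := aux_slice_left (hΨ.differentiable two_ne_zero) t s
    rwa [transport_full hΨ htrans (t, s)] at this
  exact (hasDerivAt_id t).prodMk hΨs

lemma euler_diff (hu : ContDiff ℝ (⊤ : ℕ∞) u) (hg : ContDiff ℝ (⊤ : ℕ∞) g) (hh : ContDiff ℝ (⊤ : ℕ∞) h)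
    (hS : ContDiff ℝ (⊤ : ℕ∞) S)
    (euler : ∀ (t : ℝ) (x : EuclideanSpace ℝ (Fin n)),
      deriv (fun τ => u (τ, x)) t + fderiv ℝ (fun y => u (t, y)) x (u (t, x))
        = gradient (fun y => g (t, y)) x + h (t, x) • gradient (fun y => S (t, y)) x) :
    ∀ (q : ℝ × EuclideanSpace ℝ (Fin n)) (v : ℝ × EuclideanSpace ℝ (Fin n))
      (w : EuclideanSpace ℝ (Fin n)),
      ⟪fderiv ℝ (fderiv ℝ u) q v (1, u q) + fderiv ℝ u q (0, fderiv ℝ u q v), w⟫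
        = fderiv ℝ (fderiv ℝ g) q v (0, w) + fderiv ℝ h q v * fderiv ℝ S q (0, w)
          + h q * fderiv ℝ (fderiv ℝ S) q v (0, w) := by
  intro q v w
  have hud : Differentiable ℝ u := hu.differentiable (by simp)
  have hhd : Differentiable ℝ h := hh.differentiable (by simp)
  have hu' : ContDiff ℝ 1 (fderiv ℝ u) := hu.fderiv_right (WithTop.coe_le_coe.mpr le_top)
  have hg' : ContDiff ℝ 1 (fderiv ℝ g) := hg.fderiv_right (WithTop.coe_le_coe.mpr le_top)
  have hS' : ContDiff ℝ 1 (fderiv ℝ S) := hS.fderiv_right (WithTop.coe_le_coe.mpr le_top)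
  -- LHS function
  have hf1 : HasFDerivAt (fun q' => fderiv ℝ u q' ((1 : ℝ), u q'))
      ((fderiv ℝ u q).comp
          ((0 : (ℝ × EuclideanSpace ℝ (Fin n)) →L[ℝ] ℝ).prod (fderiv ℝ u q))
        + (fderiv ℝ (fderiv ℝ u) q).flip ((1 : ℝ), u q)) q := by
    have hc : HasFDerivAt (fderiv ℝ u) (fderiv ℝ (fderiv ℝ u) q) q :=
      ((hu'.differentiable one_ne_zero) q).hasFDerivAt
    have hv : HasFDerivAt (fun q' : ℝ × EuclideanSpace ℝ (Fin n) => ((1 : ℝ), u q'))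
        ((0 : (ℝ × EuclideanSpace ℝ (Fin n)) →L[ℝ] ℝ).prod (fderiv ℝ u q)) q :=
      (hasFDerivAt_const (1 : ℝ) q).prodMk (hud q).hasFDerivAt
    exact hc.clm_apply hv
  have hL : HasFDerivAt (fun q' => ⟪fderiv ℝ u q' ((1 : ℝ), u q'), w⟫)
      (((innerSL ℝ (E := EuclideanSpace ℝ (Fin n))).flip w).comp
        ((fderiv ℝ u q).comp
            ((0 : (ℝ × EuclideanSpace ℝ (Fin n)) →L[ℝ] ℝ).prod (fderiv ℝ u q))
          + (fderiv ℝ (fderiv ℝ u) q).flip ((1 : ℝ), u q))) q :=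
    (((innerSL ℝ (E := EuclideanSpace ℝ (Fin n))).flip w).hasFDerivAt).comp q hf1
  -- RHS function
  have hR : HasFDerivAt
      (fun q' => fderiv ℝ g q' ((0 : ℝ), w) + h q' * fderiv ℝ S q' ((0 : ℝ), w))
      (((ContinuousLinearMap.apply ℝ ℝ ((0 : ℝ), w)).comp (fderiv ℝ (fderiv ℝ g) q))
        + (h q • ((ContinuousLinearMap.apply ℝ ℝ ((0 : ℝ), w)).comp (fderiv ℝ (fderiv ℝ S) q))
            + fderiv ℝ S q ((0 : ℝ), w) • fderiv ℝ h q)) q := by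
    have h1 : HasFDerivAt (fun q' => fderiv ℝ g q' ((0 : ℝ), w))
        ((ContinuousLinearMap.apply ℝ ℝ ((0 : ℝ), w)).comp (fderiv ℝ (fderiv ℝ g) q)) q :=
      (ContinuousLinearMap.apply ℝ ℝ ((0 : ℝ), w)).hasFDerivAt.comp q
        ((hg'.differentiable one_ne_zero q).hasFDerivAt)
    have h2 : HasFDerivAt (fun q' => fderiv ℝ S q' ((0 : ℝ), w))
        ((ContinuousLinearMap.apply ℝ ℝ ((0 : ℝ), w)).comp (fderiv ℝ (fderiv ℝ S) q)) q :=
      (ContinuousLinearMap.apply ℝ ℝ ((0 : ℝ), w)).hasFDerivAt.comp q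
        ((hS'.differentiable one_ne_zero q).hasFDerivAt)
    exact h1.add ((hhd q).hasFDerivAt.mul h2)
  have hfun : (fun q' => ⟪fderiv ℝ u q' ((1 : ℝ), u q'), w⟫)
      = fun q' => fderiv ℝ g q' ((0 : ℝ), w) + h q' * fderiv ℝ S q' ((0 : ℝ), w) := by
    funext q'
    exact euler_scalar hu hg hh hS euler q' w
  have huniq := (hfun ▸ hL).unique hR
  have := congrArg (fun (L : (ℝ × EuclideanSpace ℝ (Fin n)) →L[ℝ] ℝ) => L v) huniq
  simp only [ContinuousLinearMap.comp_apply, ContinuousLinearMap.add_apply,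
    ContinuousLinearMap.flip_apply, ContinuousLinearMap.prod_apply,
    ContinuousLinearMap.zero_apply, ContinuousLinearMap.smul_apply,
    ContinuousLinearMap.apply_apply, innerSL_apply_apply, smul_eq_mul] at this
  rw [inner_add_left] at this
  rw [inner_add_left]
  linarith [this]



lemma W_hasDerivAt (hu : ContDiff ℝ (⊤ : ℕ∞) u) (hg : ContDiff ℝ (⊤ : ℕ∞) g) (hh : ContDiff ℝ (⊤ : ℕ∞) h)
    (hS : ContDiff ℝ (⊤ : ℕ∞) S) (hΨ : ContDiff ℝ 2 Ψ)
    (euler : ∀ (t : ℝ) (x : EuclideanSpace ℝ (Fin n)),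
      deriv (fun τ => u (τ, x)) t + fderiv ℝ (fun y => u (t, y)) x (u (t, x))
        = gradient (fun y => g (t, y)) x + h (t, x) • gradient (fun y => S (t, y)) x)
    (htrans : ∀ (t : ℝ) (s : Fin 2 → ℝ), deriv (fun τ => Ψ (τ, s)) t = u (t, Ψ (t, s)))
    (t : ℝ) (s : Fin 2 → ℝ) :
    HasDerivAt (fun τ =>
        (⟪fderiv ℝ u (τ, Ψ (τ, s)) (0, fderiv ℝ Ψ (τ, s) (0, Pi.single 0 1)),
            fderiv ℝ Ψ (τ, s) (0, Pi.single 1 1)⟫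
          - ⟪fderiv ℝ u (τ, Ψ (τ, s)) (0, fderiv ℝ Ψ (τ, s) (0, Pi.single 1 1)),
              fderiv ℝ Ψ (τ, s) (0, Pi.single 0 1)⟫ : ℝ))
      (fderiv ℝ h (t, Ψ (t, s)) (0, fderiv ℝ Ψ (t, s) (0, Pi.single 0 1))
          * fderiv ℝ S (t, Ψ (t, s)) (0, fderiv ℝ Ψ (t, s) (0, Pi.single 1 1))
        - fderiv ℝ h (t, Ψ (t, s)) (0, fderiv ℝ Ψ (t, s) (0, Pi.single 1 1))
          * fderiv ℝ S (t, Ψ (t, s)) (0, fderiv ℝ Ψ (t, s) (0, Pi.single 0 1))) t := by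
  have hu' : ContDiff ℝ 1 (fderiv ℝ u) := hu.fderiv_right (WithTop.coe_le_coe.mpr le_top)
  set q : ℝ × EuclideanSpace ℝ (Fin n) := (t, Ψ (t, s)) with hq
  set c0 : EuclideanSpace ℝ (Fin n) := fderiv ℝ Ψ (t, s) (0, Pi.single 0 1) with hc0
  set c1 : EuclideanSpace ℝ (Fin n) := fderiv ℝ Ψ (t, s) (0, Pi.single 1 1) with hc1
  -- derivative of τ ↦ fderiv u (τ, Ψ (τ,s))
  have hA : HasDerivAt (fun τ => fderiv ℝ u (τ, Ψ (τ, s)))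
      (fderiv ℝ (fderiv ℝ u) q ((1 : ℝ), u q)) t :=
    ((hu'.differentiable one_ne_zero q).hasFDerivAt).comp_hasDerivAt t
      (kappa_curve_hasDerivAt hΨ htrans t s)
  have hc : ∀ i : Fin 2, HasDerivAt (fun τ => fderiv ℝ Ψ (τ, s) (0, Pi.single i 1))
      (fderiv ℝ u q (0, fderiv ℝ Ψ (t, s) (0, Pi.single i 1))) t := fun i =>
    c_hasDerivAt hu hΨ htrans t s (Pi.single i 1)
  -- derivative of the vector argument τ ↦ (0, cᵢ τ)
  have hv : ∀ i : Fin 2, HasDerivAt (fun τ => ((0 : ℝ), fderiv ℝ Ψ (τ, s) (0, Pi.single i 1)))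
      ((0 : ℝ), fderiv ℝ u q (0, fderiv ℝ Ψ (t, s) (0, Pi.single i 1))) t := fun i =>
    (hasDerivAt_const t (0 : ℝ)).prodMk (hc i)
  have hterm : ∀ i : Fin 2, HasDerivAt
      (fun τ => fderiv ℝ u (τ, Ψ (τ, s)) (0, fderiv ℝ Ψ (τ, s) (0, Pi.single i 1)))
      (fderiv ℝ (fderiv ℝ u) q ((1 : ℝ), u q) (0, fderiv ℝ Ψ (t, s) (0, Pi.single i 1))
        + fderiv ℝ u q (0, fderiv ℝ u q (0, fderiv ℝ Ψ (t, s) (0, Pi.single i 1)))) t := by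
    intro i
    have := hA.clm_apply (hv i)
    simpa using this
  have hinner01 : HasDerivAt (fun τ =>
      (⟪fderiv ℝ u (τ, Ψ (τ, s)) (0, fderiv ℝ Ψ (τ, s) (0, Pi.single 0 1)),
        fderiv ℝ Ψ (τ, s) (0, Pi.single 1 1)⟫ : ℝ))
      (⟪fderiv ℝ u q (0, c0), fderiv ℝ u q (0, c1)⟫
        + ⟪fderiv ℝ (fderiv ℝ u) q ((1 : ℝ), u q) (0, c0)
            + fderiv ℝ u q (0, fderiv ℝ u q (0, c0)), c1⟫) t :=
    HasDerivAt.inner ℝ (hterm 0) (hc 1)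
  have hinner10 : HasDerivAt (fun τ =>
      (⟪fderiv ℝ u (τ, Ψ (τ, s)) (0, fderiv ℝ Ψ (τ, s) (0, Pi.single 1 1)),
        fderiv ℝ Ψ (τ, s) (0, Pi.single 0 1)⟫ : ℝ))
      (⟪fderiv ℝ u q (0, c1), fderiv ℝ u q (0, c0)⟫
        + ⟪fderiv ℝ (fderiv ℝ u) q ((1 : ℝ), u q) (0, c1)
            + fderiv ℝ u q (0, fderiv ℝ u q (0, c1)), c0⟫) t :=
    HasDerivAt.inner ℝ (hterm 1) (hc 0)
  have hsub := hinner01.sub hinner10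
  have hval : (⟪fderiv ℝ u q (0, c0), fderiv ℝ u q (0, c1)⟫
        + ⟪fderiv ℝ (fderiv ℝ u) q ((1 : ℝ), u q) (0, c0)
            + fderiv ℝ u q (0, fderiv ℝ u q (0, c0)), c1⟫)
      - (⟪fderiv ℝ u q (0, c1), fderiv ℝ u q (0, c0)⟫
        + ⟪fderiv ℝ (fderiv ℝ u) q ((1 : ℝ), u q) (0, c1)
            + fderiv ℝ u q (0, fderiv ℝ u q (0, c1)), c0⟫)
      = fderiv ℝ h q (0, c0) * fderiv ℝ S q (0, c1)
        - fderiv ℝ h q (0, c1) * fderiv ℝ S q (0, c0) := by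
    have husym : IsSymmSndFDerivAt ℝ u q := hu.contDiffAt.isSymmSndFDerivAt (by rw [minSmoothness_of_isRCLikeNormedField]; exact WithTop.coe_le_coe.mpr le_top)
    have hgsym : IsSymmSndFDerivAt ℝ g q := hg.contDiffAt.isSymmSndFDerivAt (by rw [minSmoothness_of_isRCLikeNormedField]; exact WithTop.coe_le_coe.mpr le_top)
    have hSsym : IsSymmSndFDerivAt ℝ S q := hS.contDiffAt.isSymmSndFDerivAt (by rw [minSmoothness_of_isRCLikeNormedField]; exact WithTop.coe_le_coe.mpr le_top)
    have key : ∀ v w : EuclideanSpace ℝ (Fin n),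
        (⟪fderiv ℝ (fderiv ℝ u) q ((1 : ℝ), u q) (0, v)
          + fderiv ℝ u q (0, fderiv ℝ u q (0, v)), w⟫ : ℝ)
        = fderiv ℝ (fderiv ℝ g) q (0, v) (0, w) + fderiv ℝ h q (0, v) * fderiv ℝ S q (0, w)
          + h q * fderiv ℝ (fderiv ℝ S) q (0, v) (0, w) := by
      intro v w
      rw [husym ((1 : ℝ), u q) ((0 : ℝ), v)]
      exact euler_diff hu hg hh hS euler q ((0 : ℝ), v) w
    rw [key c0 c1, key c1 c0, real_inner_comm (fderiv ℝ u q (0, c1)) (fderiv ℝ u q (0, c0)),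
      hgsym ((0 : ℝ), c0) ((0 : ℝ), c1), hSsym ((0 : ℝ), c0) ((0 : ℝ), c1)]
    ring
  rw [hval] at hsub
  exact hsub

end main

section stokes

lemma periodic_fderiv {β : Type*} [NormedAddCommGroup β] [NormedSpace ℝ β]
    {φ : (Fin 2 → ℝ) → β} (hφ : Differentiable ℝ φ) (e : Fin 2 → ℝ)
    (hper : ∀ s, φ (s + e) = φ s) (s : Fin 2 → ℝ) :
    fderiv ℝ φ (s + e) = fderiv ℝ φ s := by
  have h1 : HasFDerivAt (fun s' => φ (s' + e)) ((fderiv ℝ φ (s + e)).comp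
      (ContinuousLinearMap.id ℝ (Fin 2 → ℝ))) s :=
    (hφ (s + e)).hasFDerivAt.comp s ((hasFDerivAt_id s).add_const e)
  rw [ContinuousLinearMap.comp_id] at h1
  have h2 : (fun s' => φ (s' + e)) = φ := funext hper
  rw [h2] at h1
  exact h1.fderiv.symm

lemma insertNth_one_eq (i : Fin 2) (x : Fin 1 → ℝ) :
    (i.insertNth ((1 : Fin 2 → ℝ) i) x : Fin 2 → ℝ)
      = i.insertNth ((0 : Fin 2 → ℝ) i) x + Pi.single i 1 := by
  funext j
  refine Fin.succAboveCases i ?_ ?_ j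
  · simp
  · intro k
    simp [Fin.insertNth_apply_succAbove, Pi.single_eq_of_ne (Fin.succAbove_ne i k)]

lemma stokes_zero (η σs : (Fin 2 → ℝ) → ℝ) (hη : ContDiff ℝ 2 η) (hσ : ContDiff ℝ 2 σs)
    (hηper : ∀ (s : Fin 2 → ℝ) (a : Fin 2), η (s + Pi.single a 1) = η s)
    (hσper : ∀ (s : Fin 2 → ℝ) (a : Fin 2), σs (s + Pi.single a 1) = σs s)
    (f : ℝ → ℝ) (hf : ContDiff ℝ 1 f) :
    ∫ s in Set.Icc (0 : Fin 2 → ℝ) 1,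
      f (σs s) * (fderiv ℝ η s (Pi.single 0 1) * fderiv ℝ σs s (Pi.single 1 1)
        - fderiv ℝ η s (Pi.single 1 1) * fderiv ℝ σs s (Pi.single 0 1)) = 0 := by
  have hηd : Differentiable ℝ η := hη.differentiable two_ne_zero
  have hσd : Differentiable ℝ σs := hσ.differentiable two_ne_zero
  have hη' : ContDiff ℝ 1 (fderiv ℝ η) := hη.fderiv_right (m := 1) (by norm_num)
  have hη'd : Differentiable ℝ (fderiv ℝ η) := hη'.differentiable one_ne_zero
  set F₀ : ℝ → ℝ := fun x => ∫ τ in (0:ℝ)..x, f τ with hF₀def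
  have hF₀ : ∀ x, HasDerivAt F₀ (f x) x := fun x =>
    (hf.continuous.integral_hasStrictDerivAt 0 x).hasDerivAt
  have hF₀c : Continuous F₀ :=
    (Differentiable.continuous fun x => (hF₀ x).differentiableAt)
  -- the vector field and its derivative
  set A : (Fin 2 → ℝ) → ℝ := fun s => -(fderiv ℝ η s (Pi.single 1 1) * F₀ (σs s)) with hAdef
  set B : (Fin 2 → ℝ) → ℝ := fun s => fderiv ℝ η s (Pi.single 0 1) * F₀ (σs s) with hBdef
  set A' : (Fin 2 → ℝ) → (Fin 2 → ℝ) →L[ℝ] ℝ := fun s =>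
    -((fderiv ℝ η s (Pi.single 1 1)) • (f (σs s) • fderiv ℝ σs s)
      + (F₀ (σs s)) • ((fderiv ℝ (fderiv ℝ η) s).flip (Pi.single 1 1))) with hA'def
  set B' : (Fin 2 → ℝ) → (Fin 2 → ℝ) →L[ℝ] ℝ := fun s =>
    (fderiv ℝ η s (Pi.single 0 1)) • (f (σs s) • fderiv ℝ σs s)
      + (F₀ (σs s)) • ((fderiv ℝ (fderiv ℝ η) s).flip (Pi.single 0 1)) with hB'def
  have hα : ∀ (i : Fin 2) (s : Fin 2 → ℝ), HasFDerivAt (fun s' => fderiv ℝ η s' (Pi.single i 1))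
      ((fderiv ℝ (fderiv ℝ η) s).flip (Pi.single i 1)) s := by
    intro i s
    have := (hη'd s).hasFDerivAt.clm_apply
      (hasFDerivAt_const (Pi.single i 1 : Fin 2 → ℝ) s)
    simpa using this
  have hF₀σ : ∀ s : Fin 2 → ℝ, HasFDerivAt (fun s' => F₀ (σs s'))
      (f (σs s) • fderiv ℝ σs s) s :=
    fun s => (hF₀ (σs s)).comp_hasFDerivAt s (hσd s).hasFDerivAt
  have hA' : ∀ s, HasFDerivAt A (A' s) s := fun s => ((hα 1 s).mul (hF₀σ s)).neg
  have hB' : ∀ s, HasFDerivAt B (B' s) s := fun s => (hα 0 s).mul (hF₀σ s)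
  -- package into a Fin 2-indexed field
  set Φ : (Fin 2 → ℝ) → (Fin 2 → ℝ) := fun s => ![A s, B s] with hΦdef
  set Φ' : (Fin 2 → ℝ) → (Fin 2 → ℝ) →L[ℝ] (Fin 2 → ℝ) := fun s =>
    ContinuousLinearMap.pi ![A' s, B' s] with hΦ'def
  have hΦd : ∀ s, HasFDerivAt Φ (Φ' s) s := by
    intro s
    rw [hasFDerivAt_pi']
    intro i
    refine Fin.cases ?_ (fun j => ?_) i
    · simpa [hΦdef, hΦ'def] using hA' s
    · have : (j : Fin 1) = 0 := Subsingleton.elim _ _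
      subst this
      simpa [hΦdef, hΦ'def] using hB' s
  -- continuity facts
  have cηη : Continuous (fderiv ℝ (fderiv ℝ η)) := hη'.continuous_fderiv one_ne_zero
  have cη' : Continuous (fderiv ℝ η) := hη'.continuous
  have cσ' : Continuous (fderiv ℝ σs) := (hσ.fderiv_right (m := 1) (by norm_num)).continuous
  have cA : Continuous A := by
    apply Continuous.neg
    exact ((cη'.clm_apply continuous_const).mul (hF₀c.comp hσd.continuous))
  have cB : Continuous B :=
    (cη'.clm_apply continuous_const).mul (hF₀c.comp hσd.continuous)
  have cΦ : Continuous Φ := by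
    apply continuous_pi
    intro i
    refine Fin.cases ?_ (fun j => ?_) i
    · simpa [hΦdef] using cA
    · have : (j : Fin 1) = 0 := Subsingleton.elim _ _
      subst this
      simpa [hΦdef] using cB
  -- divergence value
  have hsym : ∀ s : Fin 2 → ℝ, fderiv ℝ (fderiv ℝ η) s (Pi.single 0 1) (Pi.single 1 1)
      = fderiv ℝ (fderiv ℝ η) s (Pi.single 1 1) (Pi.single 0 1) := fun s =>
    (hη.contDiffAt.isSymmSndFDerivAt (by simp)) _ _
  have hdiv : ∀ s : Fin 2 → ℝ, (∑ i : Fin 2, Φ' s (Pi.single i 1) i)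
      = f (σs s) * (fderiv ℝ η s (Pi.single 0 1) * fderiv ℝ σs s (Pi.single 1 1)
        - fderiv ℝ η s (Pi.single 1 1) * fderiv ℝ σs s (Pi.single 0 1)) := by
    intro s
    rw [Fin.sum_univ_two]
    simp only [hΦ'def, ContinuousLinearMap.pi_apply, Matrix.cons_val_zero, Matrix.cons_val_one,
      Matrix.head_cons, ContinuousLinearMap.neg_apply, ContinuousLinearMap.add_apply,
      ContinuousLinearMap.smul_apply, ContinuousLinearMap.flip_apply, smul_eq_mul,
      hA'def, hB'def]
    rw [hsym s]
    ring
  -- integrability of the divergence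
  have hInt : MeasureTheory.IntegrableOn (fun x => ∑ i : Fin 2, Φ' x (Pi.single i 1) i)
      (Set.Icc (0 : Fin 2 → ℝ) 1) := by
    have : Continuous fun x => ∑ i : Fin 2, Φ' x (Pi.single i 1) i := by
      have : (fun x => ∑ i : Fin 2, Φ' x (Pi.single i 1) i)
          = fun x => f (σs x) * (fderiv ℝ η x (Pi.single 0 1) * fderiv ℝ σs x (Pi.single 1 1)
            - fderiv ℝ η x (Pi.single 1 1) * fderiv ℝ σs x (Pi.single 0 1)) := funext hdiv
      rw [this]
      refine (hf.continuous.comp hσd.continuous).mul ?_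
      refine Continuous.sub ?_ ?_ <;>
        exact (cη'.clm_apply continuous_const).mul (cσ'.clm_apply continuous_const)
    exact this.continuousOn.integrableOn_compact isCompact_Icc
  -- divergence theorem
  have hle : (0 : Fin 2 → ℝ) ≤ 1 := fun i => by norm_num
  have hdivthm := MeasureTheory.integral_divergence_of_hasFDerivAt_off_countable
    (n := 1) (0 : Fin 2 → ℝ) (1 : Fin 2 → ℝ) hle Φ Φ' ∅ Set.countable_empty
    cΦ.continuousOn (fun x _ => hΦd x) hInt
  -- boundary terms vanish by periodicity
  have hΦper : ∀ (s : Fin 2 → ℝ) (a : Fin 2), Φ (s + Pi.single a 1) = Φ s := by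
    intro s a
    have hησ : ∀ s' : Fin 2 → ℝ, σs (s' + Pi.single a 1) = σs s' := fun s' => hσper s' a
    have hηη : ∀ s' : Fin 2 → ℝ, η (s' + Pi.single a 1) = η s' := fun s' => hηper s' a
    have h1 := periodic_fderiv hηd (Pi.single a 1) hηη s
    simp only [hΦdef, hAdef, hBdef, h1, hσper s a]
  have hbd : ∀ i : Fin 2, (∫ x in Set.Icc ((0 : Fin 2 → ℝ) ∘ i.succAbove)
        ((1 : Fin 2 → ℝ) ∘ i.succAbove), Φ (i.insertNth ((1 : Fin 2 → ℝ) i) x) i)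
      = ∫ x in Set.Icc ((0 : Fin 2 → ℝ) ∘ i.succAbove) ((1 : Fin 2 → ℝ) ∘ i.succAbove),
          Φ (i.insertNth ((0 : Fin 2 → ℝ) i) x) i := by
    intro i
    apply MeasureTheory.integral_congr_ae
    apply Filter.Eventually.of_forall
    intro x
    beta_reduce
    rw [insertNth_one_eq i x, hΦper]
  rw [show (∫ s in Set.Icc (0 : Fin 2 → ℝ) 1,
      f (σs s) * (fderiv ℝ η s (Pi.single 0 1) * fderiv ℝ σs s (Pi.single 1 1)
        - fderiv ℝ η s (Pi.single 1 1) * fderiv ℝ σs s (Pi.single 0 1)))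
      = ∫ x in Set.Icc (0 : Fin 2 → ℝ) 1, ∑ i : Fin 2, Φ' x (Pi.single i 1) i by
    apply MeasureTheory.integral_congr_ae
    exact Filter.Eventually.of_forall fun x => (hdiv x).symm]
  rw [hdivthm]
  rw [Finset.sum_eq_zero]
  intro i _
  rw [hbd i, sub_self]

end stokes

section glue
variable {n : ℕ}
  {u : ℝ × EuclideanSpace ℝ (Fin n) → EuclideanSpace ℝ (Fin n)}
  {g h S : ℝ × EuclideanSpace ℝ (Fin n) → ℝ}
  {Ψ : ℝ × (Fin 2 → ℝ) → EuclideanSpace ℝ (Fin n)}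

-- chain rule for slices through Ψ
lemma slice2_fderiv {φ : ℝ × EuclideanSpace ℝ (Fin n) → ℝ} (hφ : Differentiable ℝ φ)
    (hΨd : Differentiable ℝ Ψ) (t : ℝ) (s v : Fin 2 → ℝ) :
    fderiv ℝ (fun s' => φ (t, Ψ (t, s'))) s v
      = fderiv ℝ φ (t, Ψ (t, s)) (0, fderiv ℝ Ψ (t, s) (0, v)) := by
  have hin : HasFDerivAt (fun s' : Fin 2 → ℝ => ((t : ℝ), Ψ (t, s')))
      (((0 : (Fin 2 → ℝ) →L[ℝ] ℝ)).prod
        ((fderiv ℝ Ψ (t, s)).comp (ContinuousLinearMap.inr ℝ ℝ (Fin 2 → ℝ)))) s :=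
    (hasFDerivAt_const t s).prodMk (aux_slice_right hΨd t s)
  have hcomp : HasFDerivAt (fun s' => φ (t, Ψ (t, s')))
      ((fderiv ℝ φ (t, Ψ (t, s))).comp
        (((0 : (Fin 2 → ℝ) →L[ℝ] ℝ)).prod
          ((fderiv ℝ Ψ (t, s)).comp (ContinuousLinearMap.inr ℝ ℝ (Fin 2 → ℝ))))) s :=
    (hφ (t, Ψ (t, s))).hasFDerivAt.comp s hin
  rw [hcomp.fderiv]
  simp

end glue

/-- The G integrand. -/
noncomputable def Gfun {n : ℕ} (u : ℝ × EuclideanSpace ℝ (Fin n) → EuclideanSpace ℝ (Fin n))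
    (S : ℝ × EuclideanSpace ℝ (Fin n) → ℝ) (Ψ : ℝ × (Fin 2 → ℝ) → EuclideanSpace ℝ (Fin n))
    (f : ℝ → ℝ) : ℝ → (Fin 2 → ℝ) → ℝ := fun τ s =>
  f (S (0, Ψ (0, s))) *
    ((⟪fderiv ℝ u (τ, Ψ (τ, s)) (0, fderiv ℝ Ψ (τ, s) (0, Pi.single 0 1)),
        fderiv ℝ Ψ (τ, s) (0, Pi.single 1 1)⟫ : ℝ)
      - ⟪fderiv ℝ u (τ, Ψ (τ, s)) (0, fderiv ℝ Ψ (τ, s) (0, Pi.single 1 1)),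
          fderiv ℝ Ψ (τ, s) (0, Pi.single 0 1)⟫)

/-- The V integrand (time derivative of G). -/
noncomputable def Vfun {n : ℕ} (h S : ℝ × EuclideanSpace ℝ (Fin n) → ℝ)
    (Ψ : ℝ × (Fin 2 → ℝ) → EuclideanSpace ℝ (Fin n))
    (f : ℝ → ℝ) : ℝ → (Fin 2 → ℝ) → ℝ := fun τ s =>
  f (S (0, Ψ (0, s))) *
    (fderiv ℝ h (τ, Ψ (τ, s)) (0, fderiv ℝ Ψ (τ, s) (0, Pi.single 0 1))
        * fderiv ℝ S (τ, Ψ (τ, s)) (0, fderiv ℝ Ψ (τ, s) (0, Pi.single 1 1))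
      - fderiv ℝ h (τ, Ψ (τ, s)) (0, fderiv ℝ Ψ (τ, s) (0, Pi.single 1 1))
        * fderiv ℝ S (τ, Ψ (τ, s)) (0, fderiv ℝ Ψ (τ, s) (0, Pi.single 0 1)))


/-- Entropy circulation on closed moving 2-surfaces: for non-isentropic flow the
integral `∮_S f(S) ω` over a closed 2-surface transported along streamlines is
constant in time. -/
theorem entropy_circulation_closed_2surface (n : ℕ) (hn : 1 ≤ n)
    (u : ℝ × EuclideanSpace ℝ (Fin n) → EuclideanSpace ℝ (Fin n))
    (hu : ContDiff ℝ (⊤ : ℕ∞) u)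
    (g h S : ℝ × EuclideanSpace ℝ (Fin n) → ℝ)
    (hg : ContDiff ℝ (⊤ : ℕ∞) g) (hh : ContDiff ℝ (⊤ : ℕ∞) h) (hS : ContDiff ℝ (⊤ : ℕ∞) S)
    (euler : ∀ (t : ℝ) (x : EuclideanSpace ℝ (Fin n)),
      deriv (fun τ => u (τ, x)) t + fderiv ℝ (fun y => u (t, y)) x (u (t, x))
        = gradient (fun y => g (t, y)) x + h (t, x) • gradient (fun y => S (t, y)) x)
    (entropy : ∀ (t : ℝ) (x : EuclideanSpace ℝ (Fin n)),
      deriv (fun τ => S (τ, x)) t + ⟪u (t, x), gradient (fun y => S (t, y)) x⟫ = 0)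
    (Ψ : ℝ × (Fin 2 → ℝ) → EuclideanSpace ℝ (Fin n)) (hΨ : ContDiff ℝ 2 Ψ)
    (hper : ∀ (t : ℝ) (s : Fin 2 → ℝ) (a : Fin 2), Ψ (t, s + Pi.single a 1) = Ψ (t, s))
    (htrans : ∀ (t : ℝ) (s : Fin 2 → ℝ), deriv (fun τ => Ψ (τ, s)) t = u (t, Ψ (t, s))) :
    ∀ f : ℝ → ℝ, ContDiff ℝ 1 f →
      ∀ t₁ t₂ : ℝ,
        (∫ s in Set.Icc (0 : Fin 2 → ℝ) 1,
            f (S (t₁, Ψ (t₁, s))) *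
              vorticity2Form u t₁ (Ψ (t₁, s))
                (fderiv ℝ (fun s' => Ψ (t₁, s')) s (Pi.single 0 1))
                (fderiv ℝ (fun s' => Ψ (t₁, s')) s (Pi.single 1 1)))
          = ∫ s in Set.Icc (0 : Fin 2 → ℝ) 1,
              f (S (t₂, Ψ (t₂, s))) *
                vorticity2Form u t₂ (Ψ (t₂, s))
                  (fderiv ℝ (fun s' => Ψ (t₂, s')) s (Pi.single 0 1))
                  (fderiv ℝ (fun s' => Ψ (t₂, s')) s (Pi.single 1 1)) := by
  intro f hf t₁ t₂
  have hud : Differentiable ℝ u := hu.differentiable (by simp)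
  have hhd : Differentiable ℝ h := hh.differentiable (by simp)
  have hSd : Differentiable ℝ S := hS.differentiable (by simp)
  have hΨd : Differentiable ℝ Ψ := hΨ.differentiable two_ne_zero
  have hσconst : ∀ (t : ℝ) (s : Fin 2 → ℝ), S (t, Ψ (t, s)) = S (0, Ψ (0, s)) :=
    sigma_const hu hS hΨ entropy htrans
  -- continuity facts
  have hcΨ' : Continuous (fderiv ℝ Ψ) := (hΨ.fderiv_right (m := 1) (by norm_num)).continuous
  have hcu' : Continuous (fderiv ℝ u) := hu.continuous_fderiv (by simp)
  have hch' : Continuous (fderiv ℝ h) := hh.continuous_fderiv (by simp)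
  have hcS' : Continuous (fderiv ℝ S) := hS.continuous_fderiv (by simp)
  have hcκ : Continuous (fun p : ℝ × (Fin 2 → ℝ) => (p.1, Ψ p)) :=
    continuous_fst.prodMk hΨ.continuous
  have hcc : ∀ i : Fin 2, Continuous (fun p : ℝ × (Fin 2 → ℝ) =>
      ((0 : ℝ), fderiv ℝ Ψ p (0, Pi.single i 1))) := fun i =>
    continuous_const.prodMk (hcΨ'.clm_apply continuous_const)
  have hcσ0 : Continuous (fun s : Fin 2 → ℝ => S (0, Ψ (0, s))) :=
    hS.continuous.comp (continuous_const.prodMk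
      (hΨ.continuous.comp (continuous_const.prodMk continuous_id)))
  have hGc : Continuous (fun p : ℝ × (Fin 2 → ℝ) => Gfun u S Ψ f p.1 p.2) := by
    unfold Gfun
    refine ((hf.continuous.comp (hcσ0.comp continuous_snd)).mul (Continuous.sub ?_ ?_))
    · exact Continuous.inner (((hcu'.comp hcκ).clm_apply (hcc 0)))
        (hcΨ'.clm_apply continuous_const)
    · exact Continuous.inner (((hcu'.comp hcκ).clm_apply (hcc 1)))
        (hcΨ'.clm_apply continuous_const)
  have hVc : Continuous (fun p : ℝ × (Fin 2 → ℝ) => Vfun h S Ψ f p.1 p.2) := by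
    unfold Vfun
    refine ((hf.continuous.comp (hcσ0.comp continuous_snd)).mul (Continuous.sub ?_ ?_))
    · exact ((hch'.comp hcκ).clm_apply (hcc 0)).mul ((hcS'.comp hcκ).clm_apply (hcc 1))
    · exact ((hch'.comp hcκ).clm_apply (hcc 1)).mul ((hcS'.comp hcκ).clm_apply (hcc 0))
  have hGc2 : ∀ τ : ℝ, Continuous (Gfun u S Ψ f τ) := fun τ =>
    hGc.comp (continuous_const.prodMk continuous_id)
  have hVc2 : ∀ τ : ℝ, Continuous (Vfun h S Ψ f τ) := fun τ =>
    hVc.comp (continuous_const.prodMk continuous_id)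
  -- the spatial integral of Vfun vanishes (Stokes)
  have hzero : ∀ τ : ℝ, (∫ s in Set.Icc (0 : Fin 2 → ℝ) 1, Vfun h S Ψ f τ s) = 0 := by
    intro τ
    have hκt : ContDiff ℝ 2 (fun s' : Fin 2 → ℝ => ((τ : ℝ), Ψ (τ, s'))) :=
      contDiff_const.prodMk (hΨ.comp (contDiff_const.prodMk contDiff_id))
    have hη : ContDiff ℝ 2 (fun s' : Fin 2 → ℝ => h (τ, Ψ (τ, s'))) :=
      (hh.of_le (WithTop.coe_le_coe.mpr le_top)).comp hκt
    have hσs : ContDiff ℝ 2 (fun s' : Fin 2 → ℝ => S (τ, Ψ (τ, s'))) :=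
      (hS.of_le (WithTop.coe_le_coe.mpr le_top)).comp hκt
    have hηper : ∀ (s : Fin 2 → ℝ) (a : Fin 2),
        h (τ, Ψ (τ, s + Pi.single a 1)) = h (τ, Ψ (τ, s)) := fun s a => by rw [hper]
    have hσper : ∀ (s : Fin 2 → ℝ) (a : Fin 2),
        S (τ, Ψ (τ, s + Pi.single a 1)) = S (τ, Ψ (τ, s)) := fun s a => by rw [hper]
    have hst := stokes_zero (fun s' => h (τ, Ψ (τ, s'))) (fun s' => S (τ, Ψ (τ, s')))
      hη hσs hηper hσper f hf
    rw [← hst]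
    apply MeasureTheory.integral_congr_ae
    apply Filter.Eventually.of_forall
    intro s
    beta_reduce
    show Vfun h S Ψ f τ s = _
    unfold Vfun
    rw [slice2_fderiv hhd hΨd τ s (Pi.single 0 1), slice2_fderiv hhd hΨd τ s (Pi.single 1 1),
      slice2_fderiv hSd hΨd τ s (Pi.single 0 1), slice2_fderiv hSd hΨd τ s (Pi.single 1 1),
      hσconst τ s]
  -- the full integral has zero derivative
  have hderiv : ∀ t₀ : ℝ, HasDerivAt
      (fun τ => ∫ s in Set.Icc (0 : Fin 2 → ℝ) 1, Gfun u S Ψ f τ s) 0 t₀ := by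
    intro t₀
    obtain ⟨C, hC⟩ : ∃ C, ∀ p ∈ (Set.Icc (t₀ - 1) (t₀ + 1) ×ˢ Set.Icc (0 : Fin 2 → ℝ) 1),
        ‖Vfun h S Ψ f p.1 p.2‖ ≤ C :=
      (isCompact_Icc.prod isCompact_Icc).exists_bound_of_continuousOn hVc.continuousOn
    have key := hasDerivAt_integral_of_dominated_loc_of_deriv_le
      (μ := MeasureTheory.volume.restrict (Set.Icc (0 : Fin 2 → ℝ) 1))
      (F := Gfun u S Ψ f) (F' := Vfun h S Ψ f) (x₀ := t₀)
      (bound := fun _ => C) (s := Metric.ball t₀ 1) (Metric.ball_mem_nhds t₀ one_pos)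
      (Filter.Eventually.of_forall fun τ => (hGc2 τ).aestronglyMeasurable)
      ((hGc2 t₀).continuousOn.integrableOn_compact isCompact_Icc)
      ((hVc2 t₀).aestronglyMeasurable)
      ?_ ?_ ?_
    · have := key.2
      rwa [hzero t₀] at this
    · -- bound
      refine MeasureTheory.ae_restrict_of_forall_mem measurableSet_Icc ?_
      intro s hs τ hτ
      refine hC (τ, s) ⟨?_, hs⟩
      rw [Metric.mem_ball, Real.dist_eq] at hτ
      have := abs_lt.mp hτ
      constructor <;> linarith [this.1, this.2]
    · exact (MeasureTheory.integrableOn_const_iff).mpr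
        (Or.inr isCompact_Icc.measure_lt_top)
    · refine Filter.Eventually.of_forall fun s => fun τ _ => ?_
      have := (W_hasDerivAt hu hg hh hS hΨ euler htrans τ s).const_mul
        (f (S (0, Ψ (0, s))))
      exact this
  -- conclude: the integral is constant
  have hconst := is_const_of_deriv_eq_zero
    (f := fun τ => ∫ s in Set.Icc (0 : Fin 2 → ℝ) 1, Gfun u S Ψ f τ s)
    (fun τ => (hderiv τ).differentiableAt) (fun τ => (hderiv τ).deriv) t₁ t₂
  -- rewrite goal in terms of Gfun
  have hrw : ∀ t : ℝ, (fun s : Fin 2 → ℝ =>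
      f (S (t, Ψ (t, s))) * vorticity2Form u t (Ψ (t, s))
        (fderiv ℝ (fun s' => Ψ (t, s')) s (Pi.single 0 1))
        (fderiv ℝ (fun s' => Ψ (t, s')) s (Pi.single 1 1)))
      = fun s => Gfun u S Ψ f t s := by
    intro t
    funext s
    unfold Gfun vorticity2Form
    rw [hσconst t s,
      aux_fderiv_slice_right hΨd t s (Pi.single 0 1),
      aux_fderiv_slice_right hΨd t s (Pi.single 1 1),
      aux_fderiv_slice_right hud t (Ψ (t, s)) (fderiv ℝ Ψ (t, s) (0, Pi.single 0 1)),
      aux_fderiv_slice_right hud t (Ψ (t, s)) (fderiv ℝ Ψ (t, s) (0, Pi.single 1 1))]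
  rw [show (∫ s in Set.Icc (0 : Fin 2 → ℝ) 1,
      f (S (t₁, Ψ (t₁, s))) * vorticity2Form u t₁ (Ψ (t₁, s))
        (fderiv ℝ (fun s' => Ψ (t₁, s')) s (Pi.single 0 1))
        (fderiv ℝ (fun s' => Ψ (t₁, s')) s (Pi.single 1 1)))
      = ∫ s in Set.Icc (0 : Fin 2 → ℝ) 1, Gfun u S Ψ f t₁ s by rw [← hrw t₁]]
  rw [show (∫ s in Set.Icc (0 : Fin 2 → ℝ) 1,
      f (S (t₂, Ψ (t₂, s))) * vorticity2Form u t₂ (Ψ (t₂, s))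
        (fderiv ℝ (fun s' => Ψ (t₂, s')) s (Pi.single 0 1))
        (fderiv ℝ (fun s' => Ψ (t₂, s')) s (Pi.single 1 1)))
      = ∫ s in Set.Icc (0 : Fin 2 → ℝ) 1, Gfun u S Ψ f t₂ s by rw [← hrw t₂]]
  exact hconst
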